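/- arXiv:1906.11482 — 2 statements merged into one kernel-verified Lean document; each statement's English description precedes it below -/
import Mathlib

section
/- Let H be a finite simple graph and v a non-isolated vertex of H. Then the independence polynomials satisfy I(Tr(H,v), x) = (2x + 1)·I(H, x) + (x + x²)·I(H_v, x). -/
open scoped Classical

/-- A finset of vertices is independent if no two of its members are adjacent. -/
def IsIndep {W : Type*} (G : SimpleGraph W) (s : Finset W) : Prop :=
  ∀ x ∈ s, ∀ y ∈ s, ¬ G.Adj x y

/-- A maximal independent set: independent and not properly contained in another
independent set. -/
def IsMaxIndep {W : Type*} (G : SimpleGraph W) (s : Finset W) : Prop :=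
  IsIndep G s ∧ ∀ t : Finset W, IsIndep G t → s ⊆ t → t = s

/-- The independence number `α(G)`: the maximum size of an independent set. -/
noncomputable def indepNum {W : Type*} (G : SimpleGraph W) [Fintype W] : ℕ :=
  sSup {n | ∃ s : Finset W, IsIndep G s ∧ s.card = n}

/-- Trung's construction `Tr(H, v)`: three new vertices `a = Sum.inr 0`, `b = Sum.inr 1`,
`c = Sum.inr 2` are added to `H`; `c` is joined to `b` and to every neighbor of `v`,
`b` is joined to `a`, and `a` is joined to `v`. -/
def Tr {V : Type*} (H : SimpleGraph V) (v : V) : SimpleGraph (V ⊕ Fin 3) :=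
  SimpleGraph.fromRel (fun x y =>
    match x, y with
    | Sum.inl x, Sum.inl y => H.Adj x y
    | Sum.inl x, Sum.inr i => (i = 0 ∧ x = v) ∨ (i = 2 ∧ H.Adj x v)
    | Sum.inr i, Sum.inr j => (i = 0 ∧ j = 1) ∨ (i = 1 ∧ j = 2)
    | _, _ => False)

/-- The set of vertices remaining after deleting the closed neighborhood `N[F]`
of a set `F` of vertices. -/
def offNbhd {V : Type*} (G : SimpleGraph V) (F : Set V) : Set V :=
  {w | w ∉ F ∧ ∀ u ∈ F, ¬ G.Adj u w}

/-- `G_F`: the induced subgraph of `G` on `V(G) \ N[F]`. -/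
def delNbhd {V : Type*} (G : SimpleGraph V) (F : Set V) : SimpleGraph (offNbhd G F) :=
  G.induce (offNbhd G F)

/-- `H_v = H \ N[v]`. -/
def delVert {V : Type*} (H : SimpleGraph V) (v : V) : SimpleGraph (offNbhd H {v}) :=
  delNbhd H {v}

/-- The independence polynomial `I(G, x) = Σ_i a_i x^i` of a finite graph,
as a polynomial over `ℚ`. -/
noncomputable def indepPoly {W : Type*} (G : SimpleGraph W) [Fintype W] : Polynomial ℚ :=
  ∑ s ∈ Finset.univ.filter (fun s : Finset W => IsIndep G s),
    (Polynomial.X : Polynomial ℚ) ^ s.card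

/-- `a_i(G)`: the number of independent sets of size `i`, indexed by `ℤ`
(so that it is `0` for `i < 0`). -/
noncomputable def numIndep {W : Type*} (G : SimpleGraph W) [Fintype W] (i : ℤ) : ℕ :=
  (Finset.univ.filter (fun s : Finset W => IsIndep G s ∧ (s.card : ℤ) = i)).card

/-- A finite graph is well-covered if every maximal independent set has size `α(G)`. -/
def WellCovered {W : Type*} (G : SimpleGraph W) [Fintype W] : Prop :=
  ∀ s : Finset W, IsMaxIndep G s → s.card = indepNum G

/-- A finite graph is a `W₂` graph if it has at least two vertices and every pair of
disjoint independent sets is contained in a pair of disjoint maximum independent sets. -/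
def IsW2 {W : Type*} (G : SimpleGraph W) [Fintype W] : Prop :=
  2 ≤ Fintype.card W ∧
    ∀ A B : Finset W, IsIndep G A → IsIndep G B → Disjoint A B →
      ∃ A' B' : Finset W, IsIndep G A' ∧ IsIndep G B' ∧ Disjoint A' B' ∧
        A ⊆ A' ∧ B ⊆ B' ∧ A'.card = indepNum G ∧ B'.card = indepNum G

section TrAux
variable {V : Type*} (H : SimpleGraph V) (v : V)

lemma delVert_adj (a b : offNbhd H {v}) : (delVert H v).Adj a b ↔ H.Adj ↑a ↑b := Iff.rfl

lemma mem_offNbhd (x : V) : x ∈ offNbhd H {v} ↔ x ≠ v ∧ ¬ H.Adj v x := by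
  simp [offNbhd]

lemma tr_adj_inl_inl (x y : V) :
    (Tr H v).Adj (Sum.inl x) (Sum.inl y) ↔ H.Adj x y := by
  constructor
  · rintro ⟨-, h | h⟩
    · exact h
    · exact h.symm
  · intro h
    exact ⟨fun e => H.ne_of_adj h (Sum.inl.inj e), Or.inl h⟩

lemma tr_adj_inl_inr (x : V) (i : Fin 3) :
    (Tr H v).Adj (Sum.inl x) (Sum.inr i) ↔ (i = 0 ∧ x = v) ∨ (i = 2 ∧ H.Adj x v) := by
  constructor
  · rintro ⟨-, h | h⟩
    · exact h
    · exact h.elim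
  · intro h
    exact ⟨Sum.inl_ne_inr, Or.inl h⟩

lemma tr_adj_inr_inr (i j : Fin 3) :
    (Tr H v).Adj (Sum.inr i) (Sum.inr j) ↔
      (i = 0 ∧ j = 1) ∨ (i = 1 ∧ j = 2) ∨ (j = 0 ∧ i = 1) ∨ (j = 1 ∧ i = 2) := by
  constructor
  · rintro ⟨-, h | h⟩
    · tauto
    · tauto
  · intro h
    refine ⟨?_, ?_⟩
    · rintro e; injection e with e; subst e
      rcases h with ⟨h1,h2⟩|⟨h1,h2⟩|⟨h1,h2⟩|⟨h1,h2⟩ <;> (rw [h1] at h2; exact absurd h2 (by decide))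
    · tauto

lemma indep_disjSum (T : Finset V) (F : Finset (Fin 3)) :
    IsIndep (Tr H v) (T.disjSum F) ↔
      IsIndep H T ∧ (0 ∈ F → v ∉ T) ∧ (2 ∈ F → ∀ u ∈ T, ¬ H.Adj u v) ∧
        ¬(0 ∈ F ∧ 1 ∈ F) ∧ ¬(1 ∈ F ∧ 2 ∈ F) := by
  constructor
  · intro h
    refine ⟨?_, ?_, ?_, ?_, ?_⟩
    · intro x hx y hy hxy
      exact h _ (Finset.inl_mem_disjSum.mpr hx) _ (Finset.inl_mem_disjSum.mpr hy)
        ((tr_adj_inl_inl H v x y).mpr hxy)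
    · intro h0 hvT
      exact h _ (Finset.inl_mem_disjSum.mpr hvT) _ (Finset.inr_mem_disjSum.mpr h0)
        ((tr_adj_inl_inr H v v 0).mpr (Or.inl ⟨rfl, rfl⟩))
    · intro h2 u hu hadj
      exact h _ (Finset.inl_mem_disjSum.mpr hu) _ (Finset.inr_mem_disjSum.mpr h2)
        ((tr_adj_inl_inr H v u 2).mpr (Or.inr ⟨rfl, hadj⟩))
    · rintro ⟨h0, h1⟩
      exact h _ (Finset.inr_mem_disjSum.mpr h0) _ (Finset.inr_mem_disjSum.mpr h1)
        ((tr_adj_inr_inr H v 0 1).mpr (Or.inl ⟨rfl, rfl⟩))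
    · rintro ⟨h1, h2⟩
      exact h _ (Finset.inr_mem_disjSum.mpr h1) _ (Finset.inr_mem_disjSum.mpr h2)
        ((tr_adj_inr_inr H v 1 2).mpr (Or.inr (Or.inl ⟨rfl, rfl⟩)))
  · rintro ⟨hI, h0, h2, h01, h12⟩ x hx y hy hadj
    rcases x with x | i <;> rcases y with y | j
    · exact hI x (Finset.inl_mem_disjSum.mp hx) y (Finset.inl_mem_disjSum.mp hy)
        ((tr_adj_inl_inl H v x y).mp hadj)
    · have hx' := Finset.inl_mem_disjSum.mp hx
      have hy' := Finset.inr_mem_disjSum.mp hy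
      rcases (tr_adj_inl_inr H v x j).mp hadj with ⟨hj, hxv⟩ | ⟨hj, hxv⟩
      · subst hj; subst hxv; exact h0 hy' hx'
      · subst hj; exact h2 hy' x hx' hxv
    · have hx' := Finset.inr_mem_disjSum.mp hx
      have hy' := Finset.inl_mem_disjSum.mp hy
      rcases (tr_adj_inl_inr H v y i).mp hadj.symm with ⟨hj, hxv⟩ | ⟨hj, hxv⟩
      · subst hj; subst hxv; exact h0 hx' hy'
      · subst hj; exact h2 hx' y hy' hxv
    · have hx' := Finset.inr_mem_disjSum.mp hx
      have hy' := Finset.inr_mem_disjSum.mp hy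
      rcases (tr_adj_inr_inr H v i j).mp hadj with ⟨e1, e2⟩ | ⟨e1, e2⟩ | ⟨e1, e2⟩ | ⟨e1, e2⟩ <;>
        subst e1 <;> subst e2
      · exact h01 ⟨hx', hy'⟩
      · exact h12 ⟨hx', hy'⟩
      · exact h01 ⟨hy', hx'⟩
      · exact h12 ⟨hy', hx'⟩

end TrAux

section SumAux
open Finset Polynomial

variable {V : Type*} [Fintype V]

noncomputable def TrPS (p : Finset V → Prop) : Polynomial ℚ :=
  ∑ T : Finset V, if p T then (Polynomial.X : Polynomial ℚ) ^ T.card else 0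

lemma TrPS_congr {p q : Finset V → Prop} (h : ∀ T, p T ↔ q T) : TrPS p = TrPS q :=
  Finset.sum_congr rfl fun T _ => if_congr (h T) rfl rfl

lemma TrPS_eq_filter (p : Finset V → Prop) [DecidablePred p] :
    TrPS p = ∑ T ∈ Finset.univ.filter p, (Polynomial.X : Polynomial ℚ) ^ T.card := by
  unfold TrPS
  rw [Finset.sum_filter]
  exact Finset.sum_congr rfl fun T _ => by by_cases h : p T <;> simp [h]

lemma TrPS_indep (H : SimpleGraph V) : TrPS (fun T => IsIndep H T) = indepPoly H := by
  rw [TrPS_eq_filter, indepPoly]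

lemma TrPS_split (p c : Finset V → Prop) :
    TrPS p = TrPS (fun T => p T ∧ c T) + TrPS (fun T => p T ∧ ¬ c T) := by
  unfold TrPS
  rw [← Finset.sum_add_distrib]
  refine Finset.sum_congr rfl fun T _ => ?_
  by_cases hp : p T <;> by_cases hc : c T <;> simp [hp, hc]

variable (H : SimpleGraph V) (v : V)

lemma TrPS_sub :
    TrPS (fun T => IsIndep H T ∧ ∀ x ∈ T, x ∈ offNbhd H {v}) = indepPoly (delVert H v) := by
  rw [TrPS_eq_filter, indepPoly]
  refine (Finset.sum_bij
    (fun (s : Finset (offNbhd H {v})) (_ : s ∈ Finset.univ.filter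
      (fun s => IsIndep (delVert H v) s)) => s.map (Function.Embedding.subtype _)) ?_ ?_ ?_ ?_).symm
  · intro s hs
    rw [Finset.mem_filter] at hs ⊢
    refine ⟨Finset.mem_univ _, ?_, ?_⟩
    · intro x hx y hy hadj
      obtain ⟨x', hx', rfl⟩ := Finset.mem_map.mp hx
      obtain ⟨y', hy', rfl⟩ := Finset.mem_map.mp hy
      exact hs.2 x' hx' y' hy' hadj
    · intro x hx
      obtain ⟨x', hx', rfl⟩ := Finset.mem_map.mp hx
      exact x'.2
  · intro s1 hs1 s2 hs2 h
    exact Finset.map_injective _ h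
  · intro T hT
    rw [Finset.mem_filter] at hT
    refine ⟨T.subtype (· ∈ offNbhd H {v}), ?_, ?_⟩
    · rw [Finset.mem_filter]
      refine ⟨Finset.mem_univ _, ?_⟩
      intro x hx y hy hadj
      rw [Finset.mem_subtype] at hx hy
      exact hT.2.1 _ hx _ hy hadj
    · show (T.subtype (· ∈ offNbhd H {v})).map (Function.Embedding.subtype _) = T
      rw [Finset.subtype_map, Finset.filter_true_of_mem hT.2.2]
  · intro s hs
    rw [Finset.card_map]

lemma TrPS_vmem :
    TrPS (fun T => IsIndep H T ∧ v ∈ T) =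
      Polynomial.X * TrPS (fun T => IsIndep H T ∧ ∀ x ∈ T, x ∈ offNbhd H {v}) := by
  rw [TrPS_eq_filter (fun T : Finset V => IsIndep H T ∧ v ∈ T),
    TrPS_eq_filter (fun T : Finset V => IsIndep H T ∧ ∀ x ∈ T, x ∈ offNbhd H {v}),
    Finset.mul_sum]
  refine Finset.sum_bij (fun T (_ : T ∈ Finset.univ.filter
      (fun T : Finset V => IsIndep H T ∧ v ∈ T)) => T.erase v) ?_ ?_ ?_ ?_
  · intro T hT
    rw [Finset.mem_filter] at hT ⊢
    obtain ⟨-, hI, hvT⟩ := hT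
    refine ⟨Finset.mem_univ _, fun x hx y hy hadj => hI x (Finset.mem_of_mem_erase hx) y
      (Finset.mem_of_mem_erase hy) hadj, ?_⟩
    intro x hx
    rw [mem_offNbhd]
    exact ⟨(Finset.mem_erase.mp hx).1, hI v hvT x (Finset.mem_of_mem_erase hx)⟩
  · intro T1 hT1 T2 hT2 h
    rw [Finset.mem_filter] at hT1 hT2
    have h' : T1.erase v = T2.erase v := h
    rw [← Finset.insert_erase hT1.2.2, ← Finset.insert_erase hT2.2.2, h']
  · intro T' hT'
    rw [Finset.mem_filter] at hT'
    obtain ⟨-, hI, hsub⟩ := hT'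
    have hvnot : v ∉ T' := fun h => ((mem_offNbhd H v v).mp (hsub v h)).1 rfl
    refine ⟨insert v T', ?_, ?_⟩
    · rw [Finset.mem_filter]
      refine ⟨Finset.mem_univ _, ?_, Finset.mem_insert_self _ _⟩
      intro x hx y hy hadj
      rcases Finset.mem_insert.mp hx with hxv | hx' <;>
        rcases Finset.mem_insert.mp hy with hyv | hy'
      · rw [hxv, hyv] at hadj; exact H.irrefl hadj
      · rw [hxv] at hadj; exact ((mem_offNbhd H v y).mp (hsub y hy')).2 hadj
      · rw [hyv] at hadj; exact ((mem_offNbhd H v x).mp (hsub x hx')).2 hadj.symm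
      · exact hI x hx' y hy' hadj
    · exact Finset.erase_insert hvnot
  · intro T hT
    rw [Finset.mem_filter] at hT
    have hpos : 0 < T.card := Finset.card_pos.mpr ⟨v, hT.2.2⟩
    show (Polynomial.X : Polynomial ℚ) ^ T.card = Polynomial.X * Polynomial.X ^ (T.erase v).card
    rw [Finset.card_erase_of_mem hT.2.2]
    have h1 : T.card - 1 + 1 = T.card := Nat.succ_pred_eq_of_pos hpos
    calc (Polynomial.X : Polynomial ℚ) ^ T.card
        = Polynomial.X ^ (T.card - 1 + 1) := by rw [h1]
      _ = Polynomial.X * Polynomial.X ^ (T.card - 1) := by rw [pow_succ]; ring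

lemma Tr_term_eval (F : Finset (Fin 3)) (q : Finset V → Prop)
    (hq : ∀ T, IsIndep (Tr H v) (T.disjSum F) ↔ q T) :
    (∑ T : Finset V, if IsIndep (Tr H v) (T.disjSum F) then
        (Polynomial.X : Polynomial ℚ) ^ (T.card + F.card) else 0)
      = Polynomial.X ^ F.card * TrPS q := by
  rw [TrPS, Finset.mul_sum]
  refine Finset.sum_congr rfl fun T _ => ?_
  rw [if_congr (hq T) rfl rfl]
  by_cases h : q T <;> simp [h, pow_add, mul_comm]

lemma Tr_term_zero (F : Finset (Fin 3))
    (hq : ∀ T : Finset V, ¬ IsIndep (Tr H v) (T.disjSum F)) :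
    (∑ T : Finset V, if IsIndep (Tr H v) (T.disjSum F) then
        (Polynomial.X : Polynomial ℚ) ^ (T.card + F.card) else 0) = 0 :=
  Finset.sum_eq_zero fun T _ => if_neg (hq T)

end SumAux

theorem indepPoly_Tr {V : Type*} [Fintype V] (H : SimpleGraph V) (v : V)
    (hv : ∃ u, H.Adj v u) :
    indepPoly (Tr H v) =
      (2 * Polynomial.X + 1) * indepPoly H +
        (Polynomial.X + Polynomial.X ^ 2) * indepPoly (delVert H v) := by
  have h1 : indepPoly (Tr H v) = ∑ F : Finset (Fin 3), ∑ T : Finset V,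
      (if IsIndep (Tr H v) (T.disjSum F) then
        (Polynomial.X : Polynomial ℚ) ^ (T.card + F.card) else 0) := by
    calc indepPoly (Tr H v)
        = ∑ s : Finset (V ⊕ Fin 3), (if IsIndep (Tr H v) s then
            (Polynomial.X : Polynomial ℚ) ^ s.card else 0) := by
          rw [indepPoly, Finset.sum_filter]
      _ = ∑ p : Finset V × Finset (Fin 3), (if IsIndep (Tr H v) (p.1.disjSum p.2) then
            (Polynomial.X : Polynomial ℚ) ^ (p.1.card + p.2.card) else 0) := by
          refine (Fintype.sum_equiv ⟨fun p : Finset V × Finset (Fin 3) => p.1.disjSum p.2,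
            fun u => (u.toLeft, u.toRight), fun p => by simp, fun u => Finset.toLeft_disjSum_toRight⟩ _ _
            fun p => ?_).symm
          beta_reduce
          simp only [Equiv.coe_fn_mk]
          rw [Finset.card_disjSum]
      _ = _ := Fintype.sum_prod_type_right _
  have huniv : (Finset.univ : Finset (Finset (Fin 3))) =
      {∅, {0}, {1}, {2}, {0,1}, {0,2}, {1,2}, {0,1,2}} := by decide
  rw [h1, huniv, Finset.sum_insert (by decide), Finset.sum_insert (by decide),
    Finset.sum_insert (by decide), Finset.sum_insert (by decide), Finset.sum_insert (by decide),
    Finset.sum_insert (by decide), Finset.sum_insert (by decide), Finset.sum_singleton]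
  beta_reduce
  -- per-piece evaluations
  rw [Tr_term_eval H v ∅ (fun T => IsIndep H T) (fun T => by
      rw [indep_disjSum]; simp)]
  rw [Tr_term_eval H v {0} (fun T => IsIndep H T ∧ v ∉ T) (fun T => by
      rw [indep_disjSum]
      simp [show (0:Fin 3) ∈ ({0}:Finset (Fin 3)) from by decide,
        show (1:Fin 3) ∉ ({0}:Finset (Fin 3)) from by decide,
        show (2:Fin 3) ∉ ({0}:Finset (Fin 3)) from by decide])]
  rw [Tr_term_eval H v {1} (fun T => IsIndep H T) (fun T => by
      rw [indep_disjSum]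
      simp [show (0:Fin 3) ∉ ({1}:Finset (Fin 3)) from by decide,
        show (1:Fin 3) ∈ ({1}:Finset (Fin 3)) from by decide,
        show (2:Fin 3) ∉ ({1}:Finset (Fin 3)) from by decide])]
  rw [Tr_term_eval H v {2} (fun T => IsIndep H T ∧ ∀ u ∈ T, ¬ H.Adj u v) (fun T => by
      rw [indep_disjSum]
      simp [show (0:Fin 3) ∉ ({2}:Finset (Fin 3)) from by decide,
        show (1:Fin 3) ∉ ({2}:Finset (Fin 3)) from by decide,
        show (2:Fin 3) ∈ ({2}:Finset (Fin 3)) from by decide])]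
  rw [Tr_term_zero H v {0,1} (fun T h =>
      ((indep_disjSum H v T _).mp h).2.2.2.1 ⟨by decide, by decide⟩)]
  rw [Tr_term_eval H v {0,2} (fun T => IsIndep H T ∧ v ∉ T ∧ ∀ u ∈ T, ¬ H.Adj u v)
    (fun T => by
      rw [indep_disjSum]
      simp [show (0:Fin 3) ∈ ({0,2}:Finset (Fin 3)) from by decide,
        show (1:Fin 3) ∉ ({0,2}:Finset (Fin 3)) from by decide,
        show (2:Fin 3) ∈ ({0,2}:Finset (Fin 3)) from by decide, and_assoc])]
  rw [Tr_term_zero H v {1,2} (fun T h =>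
      ((indep_disjSum H v T _).mp h).2.2.2.2 ⟨by decide, by decide⟩)]
  rw [Tr_term_zero H v {0,1,2} (fun T h =>
      ((indep_disjSum H v T _).mp h).2.2.2.1 ⟨by decide, by decide⟩)]
  -- cards
  rw [show (∅ : Finset (Fin 3)).card = 0 from by decide,
    show ({0} : Finset (Fin 3)).card = 1 from by decide,
    show ({1} : Finset (Fin 3)).card = 1 from by decide,
    show ({2} : Finset (Fin 3)).card = 1 from by decide,
    show ({0,2} : Finset (Fin 3)).card = 2 from by decide]
  -- relations between the TrPS pieces
  have e1 : TrPS (fun T : Finset V => IsIndep H T) = indepPoly H := TrPS_indep H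
  have e2 : TrPS (fun T : Finset V => IsIndep H T ∧ ∀ x ∈ T, x ∈ offNbhd H {v})
      = indepPoly (delVert H v) := TrPS_sub H v
  have e3 : TrPS (fun T : Finset V => IsIndep H T ∧ v ∈ T)
      = Polynomial.X * TrPS (fun T : Finset V => IsIndep H T ∧ ∀ x ∈ T, x ∈ offNbhd H {v}) :=
    TrPS_vmem H v
  have e4 : TrPS (fun T : Finset V => IsIndep H T)
      = TrPS (fun T : Finset V => IsIndep H T ∧ v ∈ T)
        + TrPS (fun T : Finset V => IsIndep H T ∧ v ∉ T) :=
    TrPS_split _ _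
  have e5 : TrPS (fun T : Finset V => IsIndep H T ∧ ∀ u ∈ T, ¬ H.Adj u v)
      = TrPS (fun T : Finset V => IsIndep H T ∧ v ∈ T)
        + TrPS (fun T : Finset V => IsIndep H T ∧ ∀ x ∈ T, x ∈ offNbhd H {v}) := by
    rw [TrPS_split (fun T : Finset V => IsIndep H T ∧ ∀ u ∈ T, ¬ H.Adj u v)
      (fun T => v ∈ T)]
    congr 1
    · refine TrPS_congr fun T => ?_
      constructor
      · rintro ⟨⟨hI, -⟩, hvT⟩; exact ⟨hI, hvT⟩
      · rintro ⟨hI, hvT⟩; exact ⟨⟨hI, fun u hu hadj => hI u hu v hvT hadj⟩, hvT⟩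
    · refine TrPS_congr fun T => ?_
      constructor
      · rintro ⟨⟨hI, hN⟩, hvT⟩
        refine ⟨hI, fun x hx => (mem_offNbhd H v x).mpr
          ⟨fun e => hvT (e ▸ hx), fun hadj => hN x hx hadj.symm⟩⟩
      · rintro ⟨hI, hsub⟩
        refine ⟨⟨hI, fun u hu hadj => ((mem_offNbhd H v u).mp (hsub u hu)).2 hadj.symm⟩,
          fun hvT => ((mem_offNbhd H v v).mp (hsub v hvT)).1 rfl⟩
  have e6 : TrPS (fun T : Finset V => IsIndep H T ∧ v ∉ T ∧ ∀ u ∈ T, ¬ H.Adj u v)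
      = TrPS (fun T : Finset V => IsIndep H T ∧ ∀ x ∈ T, x ∈ offNbhd H {v}) := by
    refine TrPS_congr fun T => ?_
    constructor
    · rintro ⟨hI, hvT, hN⟩
      exact ⟨hI, fun x hx => (mem_offNbhd H v x).mpr
        ⟨fun e => hvT (e ▸ hx), fun hadj => hN x hx hadj.symm⟩⟩
    · rintro ⟨hI, hsub⟩
      exact ⟨hI, fun hvT => ((mem_offNbhd H v v).mp (hsub v hvT)).1 rfl,
        fun u hu hadj => ((mem_offNbhd H v u).mp (hsub u hu)).2 hadj.symm⟩
  linear_combination (1 + 2 * Polynomial.X) * e1 +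
    (Polynomial.X + Polynomial.X ^ 2) * e2 - Polynomial.X * e4 +
    Polynomial.X * e5 + Polynomial.X ^ 2 * e6
end

section
/- Let G be a finite simple graph with an Eulerian independence complex, i.e., G is well-covered and for every independent set F of G (including F = ∅) one has I(G_F, −1) = (−1)^{α(G_F)}. If α(G) is odd, then I(G, −1/2) = 0. -/
open scoped Classical

/-!
Splitting an independent set `T` of `G` as `F ∪ S`, with `S` independent in `G_F`, gives
`I(G, t + y) = Σ_F t^|F| I(G_F, y)`, the sum over independent sets `F`. Take `t = 1/2`, `y = -1`.
The Eulerian condition gives `I(G_F, -1) = (-1)^α(G_F)`, and well-coveredness gives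
`α(G_F) = α(G) - |F|`, so with `α(G)` odd the right-hand side is `-Σ_F (-1/2)^|F| = -I(G, -1/2)`.
-/

open Finset

section Independence

variable {V : Type*} {G : SimpleGraph V}

lemma IsIndep.mono {s t : Finset V} (ht : IsIndep G t) (hst : s ⊆ t) : IsIndep G s :=
  fun x hx y hy => ht x (hst hx) y (hst hy)

lemma isIndep_empty : IsIndep G ∅ := by
  simp [IsIndep]

lemma IsIndep.union_of_subset_offNbhd {F S : Finset V} (hF : IsIndep G F) (hS : IsIndep G S)
    (hSF : (S : Set V) ⊆ offNbhd G F) : IsIndep G (F ∪ S) := by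
  intro x hx y hy
  rcases mem_union.mp hx with hxF | hxS <;> rcases mem_union.mp hy with hyF | hyS
  · exact hF x hxF y hyF
  · exact (hSF hyS).2 x hxF
  · exact fun hxy => (hSF hxS).2 y hyF hxy.symm
  · exact hS x hxS y hyS

lemma IsIndep.sdiff_subset_offNbhd {F T : Finset V} (hT : IsIndep G T) (hFT : F ⊆ T) :
    ((T \ F : Finset V) : Set V) ⊆ offNbhd G F := by
  intro w hw
  obtain ⟨hwT, hwF⟩ := mem_sdiff.mp hw
  exact ⟨hwF, fun u hu => hT u (hFT hu) w hwT⟩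

lemma disjoint_of_subset_offNbhd {F S : Finset V} (hSF : (S : Set V) ⊆ offNbhd G F) :
    Disjoint F S :=
  disjoint_right.mpr fun _ hx hxF => (hSF hx).1 hxF

lemma isIndep_induce_iff {A : Set V} {s : Finset A} :
    IsIndep (G.induce A) s ↔ IsIndep G (s.map (Function.Embedding.subtype _)) := by
  simp [IsIndep]

end Independence

section IndepNum

variable {V : Type*} [Fintype V] {G : SimpleGraph V}

lemma bddAbove_card_isIndep (G : SimpleGraph V) :
    BddAbove {n | ∃ s : Finset V, IsIndep G s ∧ s.card = n} :=
  ⟨Fintype.card V, fun _ ⟨t, _, ht⟩ => ht ▸ t.card_le_univ⟩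

lemma card_le_indepNum {s : Finset V} (hs : IsIndep G s) : s.card ≤ indepNum G :=
  le_csSup (bddAbove_card_isIndep G) ⟨s, hs, rfl⟩

lemma exists_isIndep_card_eq_indepNum (G : SimpleGraph V) :
    ∃ s : Finset V, IsIndep G s ∧ s.card = indepNum G :=
  Nat.sSup_mem (s := {n | ∃ s : Finset V, IsIndep G s ∧ s.card = n})
    ⟨0, ∅, isIndep_empty, card_empty⟩ (bddAbove_card_isIndep G)

lemma IsIndep.exists_isMaxIndep_superset {F : Finset V} (hF : IsIndep G F) :
    ∃ M : Finset V, IsMaxIndep G M ∧ F ⊆ M := by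
  obtain ⟨M, hM, hmax⟩ := exists_max_image (univ.filter fun t => IsIndep G t ∧ F ⊆ t) card
    ⟨F, by simp [hF]⟩
  simp only [mem_filter, mem_univ, true_and] at hM hmax
  refine ⟨M, ⟨hM.1, fun t ht hMt => ?_⟩, hM.2⟩
  exact (eq_of_subset_of_card_le hMt (hmax t ⟨ht, hM.2.trans hMt⟩)).symm

lemma card_le_indepNum_induce {A : Set V} {T : Finset V} (hT : IsIndep G T)
    (hTA : (T : Set V) ⊆ A) : T.card ≤ indepNum (G.induce A) := by
  have hmap := subtype_map_of_mem (p := (· ∈ A)) fun x hx => hTA hx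
  rw [← hmap, card_map]
  exact card_le_indepNum (isIndep_induce_iff.mpr (by rw [hmap]; exact hT))

lemma exists_isIndep_subset_card_eq_indepNum_induce (G : SimpleGraph V) (A : Set V) :
    ∃ T : Finset V, IsIndep G T ∧ (T : Set V) ⊆ A ∧ T.card = indepNum (G.induce A) := by
  obtain ⟨s, hs, hcard⟩ := exists_isIndep_card_eq_indepNum (G.induce A)
  exact ⟨_, isIndep_induce_iff.mp hs, map_subtype_subset s, by rw [card_map, hcard]⟩

/-- A maximum independent set of `G_F` extends `F`, and the part outside `F` of a maximal
independent set containing `F` lies in `G_F`. -/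
lemma indepNum_delNbhd_add_card (hwc : WellCovered G) {F : Finset V} (hF : IsIndep G F) :
    indepNum (delNbhd G (F : Set V)) + F.card = indepNum G := by
  apply le_antisymm
  · obtain ⟨T, hT, hTF, hcard⟩ := exists_isIndep_subset_card_eq_indepNum_induce G (offNbhd G F)
    have hunion := card_le_indepNum (hF.union_of_subset_offNbhd hT hTF)
    rw [card_union_of_disjoint (disjoint_of_subset_offNbhd hTF)] at hunion
    rw [delNbhd, ← hcard]
    omega
  · obtain ⟨M, hM, hFM⟩ := hF.exists_isMaxIndep_superset
    have hrest := card_le_indepNum_induce (hM.1.mono sdiff_subset)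
      (hM.1.sdiff_subset_offNbhd hFM)
    rw [card_sdiff_of_subset hFM, hwc M hM] at hrest
    rw [delNbhd]
    have := card_le_card hFM
    omega

end IndepNum

section IndepPoly

variable {V : Type*} [Fintype V] {G : SimpleGraph V}

lemma eval_indepPoly (G : SimpleGraph V) (y : ℚ) :
    (indepPoly G).eval y = ∑ s ∈ univ.filter (fun s : Finset V => IsIndep G s), y ^ s.card := by
  simp [indepPoly, Polynomial.eval_finsetSum]

lemma eval_indepPoly_induce (G : SimpleGraph V) (A : Set V) (y : ℚ) :
    (indepPoly (G.induce A)).eval y =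
      ∑ T ∈ univ.filter (fun T : Finset V => IsIndep G T ∧ (T : Set V) ⊆ A), y ^ T.card := by
  rw [eval_indepPoly]
  refine sum_nbij' (fun s => s.map (Function.Embedding.subtype _)) (fun T => T.subtype (· ∈ A))
    ?_ ?_ ?_ ?_ ?_
  · intro s hs
    simp only [mem_filter, mem_univ, true_and] at hs ⊢
    exact ⟨isIndep_induce_iff.mp hs, map_subtype_subset s⟩
  · intro T hT
    simp only [mem_filter, mem_univ, true_and] at hT ⊢
    rw [isIndep_induce_iff, subtype_map_of_mem fun x hx => hT.2 hx]
    exact hT.1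
  · intro s _
    ext a
    simp
  · intro T hT
    simp only [mem_filter, mem_univ, true_and] at hT
    exact subtype_map_of_mem fun x hx => hT.2 hx
  · intro s _
    rw [card_map]

lemma sum_subset_offNbhd_eq_sum_superset {R : Type*} [AddCommMonoid R] {F : Finset V}
    (hF : IsIndep G F) (f : Finset V → R) :
    ∑ S ∈ univ.filter (fun S : Finset V => IsIndep G S ∧ (S : Set V) ⊆ offNbhd G F), f S =
      ∑ T ∈ univ.filter (fun T : Finset V => IsIndep G T ∧ F ⊆ T), f (T \ F) := by
  refine sum_nbij' (F ∪ ·) (· \ F) ?_ ?_ ?_ ?_ ?_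
  · intro S hS
    simp only [mem_filter, mem_univ, true_and] at hS ⊢
    exact ⟨hF.union_of_subset_offNbhd hS.1 hS.2, subset_union_left⟩
  · intro T hT
    simp only [mem_filter, mem_univ, true_and] at hT ⊢
    exact ⟨hT.1.mono sdiff_subset, hT.1.sdiff_subset_offNbhd hT.2⟩
  · intro S hS
    simp only [mem_filter, mem_univ, true_and] at hS
    exact union_sdiff_cancel_left (disjoint_of_subset_offNbhd hS.2)
  · intro T hT
    simp only [mem_filter, mem_univ, true_and] at hT
    exact union_sdiff_of_subset hT.2
  · intro S hS
    simp only [mem_filter, mem_univ, true_and] at hS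
    rw [union_sdiff_cancel_left (disjoint_of_subset_offNbhd hS.2)]

lemma eval_indepPoly_add (G : SimpleGraph V) (t y : ℚ) :
    (indepPoly G).eval (t + y) =
      ∑ F ∈ univ.filter (fun F : Finset V => IsIndep G F),
        t ^ F.card * (indepPoly (delNbhd G (F : Set V))).eval y := by
  calc (indepPoly G).eval (t + y)
      = ∑ T ∈ univ.filter (fun T : Finset V => IsIndep G T),
          ∑ F ∈ T.powerset, t ^ F.card * y ^ (T.card - F.card) := by
        simp only [sum_pow_mul_eq_add_pow, eval_indepPoly]
    _ = ∑ F ∈ univ.filter (fun F : Finset V => IsIndep G F),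
          ∑ T ∈ univ.filter (fun T : Finset V => IsIndep G T ∧ F ⊆ T),
            t ^ F.card * y ^ (T.card - F.card) := by
        refine sum_comm' fun T F => ?_
        simp only [mem_filter, mem_univ, true_and, mem_powerset]
        exact ⟨fun h => ⟨h, h.1.mono h.2⟩, fun h => h.1⟩
    _ = _ := by
        refine sum_congr rfl fun F hF => ?_
        rw [delNbhd, eval_indepPoly_induce, mul_sum,
          sum_subset_offNbhd_eq_sum_superset (mem_filter.mp hF).2]
        refine sum_congr rfl fun T hT => ?_
        rw [card_sdiff_of_subset (mem_filter.mp hT).2.2]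

end IndepPoly

lemma neg_one_pow_eq_neg_neg_one_pow_of_odd_add {R : Type*} [CommRing R] {m k : ℕ}
    (h : Odd (m + k)) : (-1 : R) ^ m = -(-1) ^ k := by
  have hsum : (-1 : R) ^ m * (-1) ^ k = -1 := by rw [← pow_add, h.neg_one_pow]
  have hsq : (-1 : R) ^ k * (-1) ^ k = 1 := by rw [← pow_add, Even.neg_one_pow ⟨k, rfl⟩]
  linear_combination (-1 : R) ^ k * hsum - (-1 : R) ^ m * hsq

theorem eval_neg_half_eq_zero_of_eulerian {V : Type*} [Fintype V] (G : SimpleGraph V)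
    (hwc : WellCovered G)
    (heuler : ∀ F : Finset V, IsIndep G F →
      (indepPoly (delNbhd G (F : Set V))).eval (-1 : ℚ) =
        (-1 : ℚ) ^ indepNum (delNbhd G (F : Set V)))
    (hodd : Odd (indepNum G)) :
    (indepPoly G).eval (-(1 / 2) : ℚ) = 0 := by
  have hterm : ∀ F ∈ univ.filter (fun F : Finset V => IsIndep G F),
      (1 / 2 : ℚ) ^ F.card * (indepPoly (delNbhd G (F : Set V))).eval (-1) =
        -(-(1 / 2) : ℚ) ^ F.card := by
    intro F hF
    have hF : IsIndep G F := (mem_filter.mp hF).2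
    rw [heuler F hF, neg_one_pow_eq_neg_neg_one_pow_of_odd_add
      ((indepNum_delNbhd_add_card hwc hF).symm ▸ hodd), neg_pow (1 / 2 : ℚ)]
    ring
  have hsymm : (indepPoly G).eval (-(1 / 2) : ℚ) = -(indepPoly G).eval (-(1 / 2) : ℚ) := by
    calc (indepPoly G).eval (-(1 / 2) : ℚ)
        = (indepPoly G).eval (1 / 2 + -1) := by norm_num
      _ = ∑ F ∈ univ.filter (fun F : Finset V => IsIndep G F), -(-(1 / 2) : ℚ) ^ F.card := by
        rw [eval_indepPoly_add, sum_congr rfl hterm]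
      _ = -(indepPoly G).eval (-(1 / 2) : ℚ) := by rw [sum_neg_distrib, eval_indepPoly]
  linarith
end
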